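/- For any connected graph G, the strong partition dimension satisfies ω(G_SR) ≤ pd_s(G) ≤ α(G_SR) + 1, where ω and α denote clique number and vertex cover number of the strong resolving graph. -/

import Mathlib

open SimpleGraph Finset

variable {V : Type*}

/-- A vertex `x` resolves the pair `u, v` if it is at different distances from them. -/
def IsResolvingSet (G : SimpleGraph V) (S : Set V) : Prop :=
  ∀ u v : V, u ≠ v → ∃ x ∈ S, G.dist u x ≠ G.dist v x

/-- The metric dimension: minimum cardinality of a resolving set. -/
noncomputable def metricDim (G : SimpleGraph V) [Fintype V] : ℕ :=
  sInf {n | ∃ S : Finset V, S.card = n ∧ IsResolvingSet G ↑S}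

/-- `w` strongly resolves `u, v`. -/
def StronglyResolves (G : SimpleGraph V) (w u v : V) : Prop :=
  G.dist w u = G.dist w v + G.dist v u ∨ G.dist w v = G.dist w u + G.dist u v

def IsStrongResolvingSet (G : SimpleGraph V) (S : Set V) : Prop :=
  ∀ u v : V, u ≠ v → ∃ w ∈ S, StronglyResolves G w u v

noncomputable def strongMetricDim (G : SimpleGraph V) [Fintype V] : ℕ :=
  sInf {n | ∃ S : Finset V, S.card = n ∧ IsStrongResolvingSet G ↑S}

/-- `u` is maximally distant from `v`. -/
def MaxDistant (G : SimpleGraph V) (u v : V) : Prop :=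
  ∀ w : V, G.Adj u w → G.dist v w ≤ G.dist v u

def MutuallyMaxDistant (G : SimpleGraph V) (u v : V) : Prop :=
  MaxDistant G u v ∧ MaxDistant G v u

/-- The strong resolving graph of `G`. -/
def strongResolvingGraph (G : SimpleGraph V) : SimpleGraph V where
  Adj u v := u ≠ v ∧ MutuallyMaxDistant G u v
  symm := by
    constructor
    intro u v h
    exact ⟨h.1.symm, h.2.2, h.2.1⟩
  loopless := by
    constructor
    intro u h
    exact h.1 rfl

def IsVertexCover (H : SimpleGraph V) (S : Set V) : Prop :=
  ∀ u v : V, H.Adj u v → u ∈ S ∨ v ∈ S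

noncomputable def vertexCoverNum (H : SimpleGraph V) [Fintype V] : ℕ :=
  sInf {n | ∃ S : Finset V, S.card = n ∧ _root_.IsVertexCover H ↑S}

def IsLocalResolvingSet (G : SimpleGraph V) (S : Set V) : Prop :=
  ∀ u v : V, G.Adj u v → ∃ x ∈ S, G.dist u x ≠ G.dist v x

noncomputable def localMetricDim (G : SimpleGraph V) [Fintype V] : ℕ :=
  sInf {n | ∃ S : Finset V, S.card = n ∧ IsLocalResolvingSet G ↑S}

def IsIndepVertexSet (G : SimpleGraph V) (S : Set V) : Prop :=
  S.Pairwise fun u v => ¬ G.Adj u v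

noncomputable def indepNum (G : SimpleGraph V) [Fintype V] : ℕ :=
  sSup {n | ∃ S : Finset V, S.card = n ∧ IsIndepVertexSet G ↑S}

def IsAdjResolvingSet (G : SimpleGraph V) (S : Set V) : Prop :=
  ∀ x y : V, x ≠ y → x ∉ S → y ∉ S →
    ∃ s ∈ S, (G.Adj s x ∧ ¬ G.Adj s y) ∨ (¬ G.Adj s x ∧ G.Adj s y)

noncomputable def adjDim (G : SimpleGraph V) [Fintype V] : ℕ :=
  sInf {n | ∃ S : Finset V, S.card = n ∧ IsAdjResolvingSet G ↑S}

def IsKResolvingSet (G : SimpleGraph V) (k : ℕ) (S : Finset V) : Prop :=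
  ∀ x y : V, x ≠ y → k ≤ (S.filter fun w => G.dist x w ≠ G.dist y w).card

noncomputable def kMetricDim (G : SimpleGraph V) [Fintype V] (k : ℕ) : ℕ :=
  sInf {n | ∃ S : Finset V, S.card = n ∧ IsKResolvingSet G k S}

def IsKMetricDimensional (G : SimpleGraph V) (k : ℕ) : Prop :=
  (∃ S : Finset V, IsKResolvingSet G k S) ∧
    ∀ j : ℕ, (∃ S : Finset V, IsKResolvingSet G j S) → j ≤ k

/-- distance from a vertex to a finite set of vertices -/
noncomputable def fsetDist (G : SimpleGraph V) (v : V) (P : Finset V) : ℕ :=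
  sInf {d | ∃ w ∈ P, G.dist v w = d}

def IsResolvingPartition [Fintype V] [DecidableEq V] (G : SimpleGraph V)
    (Pt : Finpartition (Finset.univ : Finset V)) : Prop :=
  ∀ u v : V, u ≠ v → ∃ P ∈ Pt.parts, fsetDist G u P ≠ fsetDist G v P

noncomputable def partitionDim (G : SimpleGraph V) [Fintype V] [DecidableEq V] : ℕ :=
  sInf {n | ∃ Pt : Finpartition (Finset.univ : Finset V), Pt.parts.card = n ∧ IsResolvingPartition G Pt}

def SetStronglyResolves (G : SimpleGraph V) (W : Finset V) (x y : V) : Prop :=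
  x ∉ W ∧ y ∉ W ∧
    (fsetDist G x W = G.dist x y + fsetDist G y W ∨
      fsetDist G y W = G.dist y x + fsetDist G x W)

def IsStrongResolvingPartition [Fintype V] [DecidableEq V] (G : SimpleGraph V)
    (Pt : Finpartition (Finset.univ : Finset V)) : Prop :=
  ∀ Q ∈ Pt.parts, ∀ x ∈ Q, ∀ y ∈ Q, x ≠ y →
    ∃ P ∈ Pt.parts, SetStronglyResolves G P x y

noncomputable def strongPartitionDim (G : SimpleGraph V) [Fintype V] [DecidableEq V] : ℕ :=
  sInf {n | ∃ Pt : Finpartition (Finset.univ : Finset V),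
    Pt.parts.card = n ∧ IsStrongResolvingPartition G Pt}

/-- distance from an edge (as an unordered pair) to a vertex -/
noncomputable def edgeDist (G : SimpleGraph V) (e : Sym2 V) (v : V) : ℕ :=
  Sym2.lift ⟨fun a b => min (G.dist a v) (G.dist b v), fun a b => min_comm _ _⟩ e

def IsEdgeResolvingSet (G : SimpleGraph V) (S : Set V) : Prop :=
  ∀ e ∈ G.edgeSet, ∀ f ∈ G.edgeSet, e ≠ f → ∃ x ∈ S, edgeDist G e x ≠ edgeDist G f x

noncomputable def edgeMetricDim (G : SimpleGraph V) [Fintype V] : ℕ :=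
  sInf {n | ∃ S : Finset V, S.card = n ∧ IsEdgeResolvingSet G ↑S}

noncomputable def Rset (G : SimpleGraph V) [Fintype V] (x y : V) : Finset V :=
  Finset.univ.filter fun w => G.dist x w ≠ G.dist y w

def IsResolvingFunction (G : SimpleGraph V) [Fintype V] (f : V → ℝ) : Prop :=
  (∀ v : V, 0 ≤ f v ∧ f v ≤ 1) ∧
    ∀ x y : V, x ≠ y → 1 ≤ ∑ w ∈ Rset G x y, f w

noncomputable def fracMetricDim (G : SimpleGraph V) [Fintype V] : ℝ :=
  sInf {t : ℝ | ∃ f : V → ℝ, IsResolvingFunction G f ∧ t = ∑ v, f v}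

def AreTwins (G : SimpleGraph V) (u v : V) : Prop :=
  u ≠ v ∧ (G.neighborSet u = G.neighborSet v ∨
    insert u (G.neighborSet u) = insert v (G.neighborSet v))

noncomputable def graphDiam (G : SimpleGraph V) : ℕ :=
  sSup (Set.range fun p : V × V => G.dist p.1 p.2)



/-!
Two mutually maximally distant vertices `x, y` can never be strongly resolved by a set `P`
avoiding them: if `d(x, P) = d(x, y) + d(y, P)`, then `y` lies on a geodesic from `x` to a
nearest vertex of `P`, and the next vertex on it is farther from `x` than `y`. Hence the
vertices of a clique of `G_SR` lie in distinct parts of any strong resolving partition.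

Conversely, any two vertices `x ≠ y` extend to a geodesic `u ⋯ x ⋯ y ⋯ v` whose ends are
mutually maximally distant, so a vertex cover `S` of `G_SR` contains `u` or `v`, and that
singleton strongly resolves `x, y`. Thus the complement of `S` together with the singletons
of `S` is a strong resolving partition.
-/

namespace Finpartition

variable {α : Type*} [GeneralizedBooleanAlgebra α] [DecidableEq α] {a b : α}

lemma card_parts_extendOfLE_le (P : Finpartition a) (hab : a ≤ b) :
    #(P.extendOfLE hab).parts ≤ #P.parts + 1 := by
  calc #(P.extendOfLE hab).parts ≤ #(insert (b \ a) P.parts) :=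
        card_le_card fun p hp ↦ by
          rcases P.mem_parts_or_eq_sdiff_of_mem_extendOfLE hab hp with h | rfl
          · exact mem_insert_of_mem h
          · exact mem_insert_self _ _
    _ ≤ #P.parts + 1 := card_insert_le _ _

end Finpartition

section Distance

variable {G : SimpleGraph V} {u v w x y : V}

lemma SimpleGraph.Reachable.exists_adj_dist_add_one (h : G.Reachable u v) (hne : u ≠ v) :
    ∃ z, G.Adj u z ∧ G.dist z v + 1 = G.dist u v := by
  obtain ⟨p, hp⟩ := h.exists_walk_length_eq_dist
  cases p with
  | nil => exact absurd rfl hne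
  | @cons _ z _ hadj q =>
    refine ⟨z, hadj, le_antisymm ?_ ?_⟩
    · rw [← hp, Walk.length_cons]
      exact Nat.add_le_add_right (dist_le q) 1
    · calc G.dist u v ≤ G.dist u z + G.dist z v := q.reachable.dist_triangle_right u
        _ = _ := by rw [dist_eq_one_iff_adj.mpr hadj, add_comm]

lemma MaxDistant.dist_lt_add (hyx : MaxDistant G y x) (hyw : G.Reachable y w) (hne : w ≠ y) :
    G.dist x w < G.dist x y + G.dist y w := by
  obtain ⟨z, hz, hzw⟩ := hyw.exists_adj_dist_add_one hne.symm
  calc G.dist x w ≤ G.dist x z + G.dist z w := (hz.reachable.symm.trans hyw).dist_triangle_right x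
    _ ≤ G.dist x y + G.dist z w := Nat.add_le_add_right (hyx z hz) _
    _ < G.dist x y + G.dist y w := by omega

lemma SimpleGraph.Connected.exists_maxDistant_dist_eq_add [Fintype V] (hG : G.Connected)
    (y x : V) : ∃ u, MaxDistant G u y ∧ G.dist y u = G.dist y x + G.dist x u := by
  classical
  obtain ⟨u, hu, hmax⟩ := (univ.filter fun u ↦ G.dist y u = G.dist y x + G.dist x u)
    |>.exists_max_image (G.dist y) ⟨x, by simp⟩
  rw [mem_filter] at hu
  refine ⟨u, fun z hz ↦ not_lt.mp fun hlt ↦ ?_, hu.2⟩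
  have hxz : G.dist x z ≤ G.dist x u + 1 := by
    simpa [dist_eq_one_iff_adj.mpr hz] using (hG u z).dist_triangle_right x
  have hyz : G.dist y z ≤ G.dist y x + G.dist x z := (hG x z).dist_triangle_right y
  have := hmax z (mem_filter.mpr ⟨mem_univ z, by omega⟩)
  omega

lemma SimpleGraph.Connected.exists_strongResolvingGraph_adj_geodesic [Fintype V]
    (hG : G.Connected) (hxy : x ≠ y) :
    ∃ u v, (strongResolvingGraph G).Adj u v ∧
      G.dist y u = G.dist y x + G.dist x u ∧ G.dist x v = G.dist x y + G.dist y v := by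
  obtain ⟨u, hu, hyu⟩ := hG.exists_maxDistant_dist_eq_add y x
  obtain ⟨v, hv, huv⟩ := hG.exists_maxDistant_dist_eq_add u y
  have hdist : ∀ a b, G.dist a b = G.dist b a := fun _ _ ↦ dist_comm
  have hvx : G.dist u v ≤ G.dist u x + G.dist x v := (hG x v).dist_triangle_right u
  have hxv : G.dist x v ≤ G.dist x y + G.dist y v := (hG y v).dist_triangle_right x
  have hyx : 0 < G.dist y x := hG.pos_dist_of_ne hxy.symm
  have huv_ne : u ≠ v := by
    rintro rfl
    have := hdist y u
    simp only [dist_self] at huv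
    omega
  have huv_max : MaxDistant G u v := fun z hz ↦ by
    have := (hG y z).dist_triangle_right v
    have := hu z hz
    have := hdist v y; have := hdist v u; have := hdist y u
    omega
  refine ⟨u, v, ⟨huv_ne, huv_max, hv⟩, hyu, ?_⟩
  have := hdist y u; have := hdist x u; have := hdist u x; have := hdist y x
  omega

end Distance

section SetDistance

variable {G : SimpleGraph V} {P : Finset V} {w x y : V}

@[simp]
lemma fsetDist_singleton (G : SimpleGraph V) (v u : V) : fsetDist G v {u} = G.dist v u := by
  simp [fsetDist, eq_comm]

lemma fsetDist_le_dist (G : SimpleGraph V) (v : V) (hw : w ∈ P) : fsetDist G v P ≤ G.dist v w :=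
  Nat.sInf_le ⟨w, hw, rfl⟩

lemma exists_mem_dist_eq_fsetDist (G : SimpleGraph V) (v : V) (hP : P.Nonempty) :
    ∃ w ∈ P, G.dist v w = fsetDist G v P :=
  let ⟨w, hw⟩ := hP
  Nat.sInf_mem (s := {d | ∃ w ∈ P, G.dist v w = d}) ⟨_, w, hw, rfl⟩

lemma MaxDistant.fsetDist_ne_add (hG : G.Connected) (hyx : MaxDistant G y x) (hP : P.Nonempty)
    (hy : y ∉ P) : fsetDist G x P ≠ G.dist x y + fsetDist G y P := fun h ↦ by
  obtain ⟨w, hw, hyw⟩ := exists_mem_dist_eq_fsetDist G y hP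
  have := fsetDist_le_dist G x hw
  have := hyx.dist_lt_add (hG y w) (ne_of_mem_of_not_mem hw hy)
  omega

lemma SimpleGraph.Connected.not_setStronglyResolves (hG : G.Connected)
    (hxy : (strongResolvingGraph G).Adj x y) (hP : P.Nonempty) :
    ¬ SetStronglyResolves G P x y := by
  rintro ⟨hx, hy, h | h⟩
  · exact hxy.2.2.fsetDist_ne_add hG hP hy h
  · exact hxy.2.1.fsetDist_ne_add hG hP hx h

end SetDistance

section Partition

variable [Fintype V] [DecidableEq V] {G : SimpleGraph V}

lemma isStrongResolvingPartition_bot (G : SimpleGraph V) : IsStrongResolvingPartition G ⊥ := by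
  intro Q hQ x hx y hy hxy
  obtain ⟨a, -, rfl⟩ := Finpartition.mem_bot_iff.mp hQ
  exact absurd ((mem_singleton.mp hx).trans (mem_singleton.mp hy).symm) hxy

lemma SimpleGraph.Connected.cliqueNum_strongResolvingGraph_le_card_parts (hG : G.Connected)
    {Pt : Finpartition (univ : Finset V)} (hPt : IsStrongResolvingPartition G Pt) :
    (strongResolvingGraph G).cliqueNum ≤ #Pt.parts := by
  obtain ⟨s, hs⟩ := (strongResolvingGraph G).exists_isNClique_cliqueNum
  rw [← hs.card_eq]
  refine card_le_card_of_injOn Pt.part (fun x _ ↦ Pt.part_mem.mpr (mem_univ x)) ?_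
  intro x hx y hy hpart
  by_contra hxy
  obtain ⟨P, hP, hres⟩ := hPt _ (Pt.part_mem.mpr (mem_univ x)) x
    (Pt.mem_part_self.mpr (mem_univ x)) y (hpart ▸ Pt.mem_part_self.mpr (mem_univ y)) hxy
  exact hG.not_setStronglyResolves (hs.isClique hx hy hxy) (Pt.nonempty_of_mem_parts hP) hres

lemma SimpleGraph.Connected.isStrongResolvingPartition_of_isVertexCover (hG : G.Connected)
    {S : Finset V} (hS : _root_.IsVertexCover (strongResolvingGraph G) S) :
    IsStrongResolvingPartition G ((⊥ : Finpartition S).extendOfLE (subset_univ S)) := by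
  intro Q hQ x hx y hy hxy
  rcases Finpartition.mem_parts_or_eq_sdiff_of_mem_extendOfLE _ _ hQ with hQ | rfl
  · obtain ⟨a, -, rfl⟩ := Finpartition.mem_bot_iff.mp hQ
    exact absurd ((mem_singleton.mp hx).trans (mem_singleton.mp hy).symm) hxy
  have hxS : x ∉ S := (mem_sdiff.mp hx).2
  have hyS : y ∉ S := (mem_sdiff.mp hy).2
  have hsingleton (a : V) (ha : a ∈ S) :
      {a} ∈ ((⊥ : Finpartition S).extendOfLE (subset_univ S)).parts :=
    Finpartition.parts_subset_extendOfLE _ _ (Finpartition.mem_bot_iff.mpr ⟨a, ha, rfl⟩)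
  obtain ⟨u, v, huv, hyu, hxv⟩ := hG.exists_strongResolvingGraph_adj_geodesic hxy
  rcases hS u v huv with hu | hv
  · refine ⟨{u}, hsingleton u hu, ?_, ?_, Or.inr ?_⟩
    · exact mem_singleton.not.mpr (ne_of_mem_of_not_mem hu hxS).symm
    · exact mem_singleton.not.mpr (ne_of_mem_of_not_mem hu hyS).symm
    · simpa using hyu
  · refine ⟨{v}, hsingleton v hv, ?_, ?_, Or.inl ?_⟩
    · exact mem_singleton.not.mpr (ne_of_mem_of_not_mem hv hxS).symm
    · exact mem_singleton.not.mpr (ne_of_mem_of_not_mem hv hyS).symm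
    · simpa using hxv

end Partition

theorem stmt17 [Fintype V] [DecidableEq V] (G : SimpleGraph V) (hG : G.Connected) :
    (strongResolvingGraph G).cliqueNum ≤ strongPartitionDim G ∧
      strongPartitionDim G ≤ _root_.vertexCoverNum (strongResolvingGraph G) + 1 := by
  obtain ⟨S, hScard, hS⟩ : _root_.vertexCoverNum (strongResolvingGraph G) ∈
      {n | ∃ S : Finset V, #S = n ∧ _root_.IsVertexCover (strongResolvingGraph G) ↑S} :=
    Nat.sInf_mem ⟨_, univ, rfl, fun u _ _ ↦ Or.inl (mem_univ u)⟩
  constructor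
  · refine le_csInf ⟨_, ⊥, rfl, isStrongResolvingPartition_bot G⟩ ?_
    rintro _ ⟨Pt, rfl, hPt⟩
    exact hG.cliqueNum_strongResolvingGraph_le_card_parts hPt
  · calc strongPartitionDim G
        ≤ #((⊥ : Finpartition S).extendOfLE (subset_univ S)).parts :=
          Nat.sInf_le ⟨_, rfl, hG.isStrongResolvingPartition_of_isVertexCover hS⟩
      _ ≤ #S + 1 := by
          simpa [Finpartition.card_bot] using
            (⊥ : Finpartition S).card_parts_extendOfLE_le (subset_univ S)
      _ = _root_.vertexCoverNum (strongResolvingGraph G) + 1 := by rw [hScard]
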